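/- arXiv:2204.06944 — 5 statements merged into one kernel-verified Lean document; each statement's English description precedes it below -/
import Mathlib

section
/- The minimal minimum cuts of a graph form a family of pairwise disjoint vertex sets. That is, if A and B are minimum edge cuts of a connected graph G such that no minimum cut is strictly contained in A nor in B, then either A = B or A ∩ B = ∅. -/
/-- The set of edges (all of `ι`, given by endpoints via `ends`) with exactly one endpoint in `C`. -/
def edgeCut {V ι : Type*} [DecidableEq V] [Fintype ι] (ends : ι → V × V) (C : Finset V) :
    Finset ι :=
  Finset.univ.filter
    (fun e => ((ends e).1 ∈ C ∧ (ends e).2 ∉ C) ∨ ((ends e).2 ∈ C ∧ (ends e).1 ∉ C))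

/-- `C` is a minimum cut: a nonempty proper vertex set minimizing the number of crossing edges. -/
def IsMinCut {V ι : Type*} [Fintype V] [DecidableEq V] [Fintype ι] (ends : ι → V × V)
    (C : Finset V) : Prop :=
  C.Nonempty ∧ C ≠ Finset.univ ∧
    ∀ D : Finset V, D.Nonempty → D ≠ Finset.univ →
      (edgeCut ends C).card ≤ (edgeCut ends D).card

/-- Posimodularity of the cut function, per-edge hence globally. -/
lemma edgeCut_posimodular {V ι : Type*} [DecidableEq V] [Fintype ι] (ends : ι → V × V)
    (A B : Finset V) :
    (edgeCut ends (A \ B)).card + (edgeCut ends (B \ A)).card ≤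
      (edgeCut ends A).card + (edgeCut ends B).card := by
  classical
  simp only [edgeCut, Finset.card_filter, ← Finset.sum_add_distrib]
  apply Finset.sum_le_sum
  intro e _
  set u := (ends e).1
  set v := (ends e).2
  simp only [Finset.mem_sdiff]
  by_cases h1 : u ∈ A <;> by_cases h2 : u ∈ B <;> by_cases h3 : v ∈ A <;>
    by_cases h4 : v ∈ B <;> simp [h1, h2, h3, h4]

/-- Minimal minimum cuts of a connected graph are pairwise disjoint: if `A` and `B` are minimum
cuts such that no minimum cut is strictly contained in `A` nor in `B`, then `A = B` or
`A ∩ B = ∅`. -/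
theorem stmt1 {V ι : Type*} [Fintype V] [DecidableEq V] [Fintype ι] (ends : ι → V × V)
    (hconn : ∀ C : Finset V, C.Nonempty → C ≠ Finset.univ → (edgeCut ends C).Nonempty)
    (A B : Finset V) (hA : IsMinCut ends A) (hB : IsMinCut ends B)
    (hAmin : ∀ D : Finset V, IsMinCut ends D → ¬ D ⊂ A)
    (hBmin : ∀ D : Finset V, IsMinCut ends D → ¬ D ⊂ B) :
    A = B ∨ A ∩ B = ∅ := by
  by_cases hAB : A = B
  · exact Or.inl hAB
  right
  by_contra hne
  have hint : (A ∩ B).Nonempty := Finset.nonempty_iff_ne_empty.mpr hne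
  obtain ⟨hAne, hAuniv, hAle⟩ := hA
  obtain ⟨hBne, hBuniv, hBle⟩ := hB
  -- A \ B is nonempty (else A ⊊ B contradicting minimality of B)
  have hABne : (A \ B).Nonempty := by
    rw [Finset.sdiff_nonempty]
    intro hsub
    exact hBmin A ⟨hAne, hAuniv, hAle⟩ (Finset.ssubset_iff_subset_ne.mpr ⟨hsub, hAB⟩)
  have hBAne : (B \ A).Nonempty := by
    rw [Finset.sdiff_nonempty]
    intro hsub
    exact hAmin B ⟨hBne, hBuniv, hBle⟩
      (Finset.ssubset_iff_subset_ne.mpr ⟨hsub, fun h => hAB h.symm⟩)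
  have hABu : A \ B ≠ Finset.univ := fun h => hAuniv
    (Finset.univ_subset_iff.mp (h ▸ Finset.sdiff_subset))
  have hBAu : B \ A ≠ Finset.univ := fun h => hBuniv
    (Finset.univ_subset_iff.mp (h ▸ Finset.sdiff_subset))
  -- both A and B achieve the same minimum m
  have hm : (edgeCut ends B).card = (edgeCut ends A).card :=
    le_antisymm (hBle A hAne hAuniv) (hAle B hBne hBuniv)
  have h1 : (edgeCut ends A).card ≤ (edgeCut ends (A \ B)).card := hAle _ hABne hABu
  have h2 : (edgeCut ends A).card ≤ (edgeCut ends (B \ A)).card := hAle _ hBAne hBAu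
  have hposi := edgeCut_posimodular ends A B
  have heq : (edgeCut ends (A \ B)).card = (edgeCut ends A).card := by omega
  -- A \ B is a minimum cut strictly contained in A: contradiction
  have hmin : IsMinCut ends (A \ B) := by
    refine ⟨hABne, hABu, fun D hDne hDu => ?_⟩
    rw [heq]
    exact hAle D hDne hDu
  apply hAmin (A \ B) hmin
  refine Finset.ssubset_iff_subset_ne.mpr ⟨Finset.sdiff_subset, fun h => ?_⟩
  obtain ⟨x, hx⟩ := hint
  rw [Finset.mem_inter] at hx
  have := h ▸ hx.1
  rw [Finset.mem_sdiff] at this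
  exact this.2 hx.2
end

section
/- Uncrossing of 2-cuts in a 2-edge-connected graph: if G is a 2-edge-connected graph, r a vertex, and C₁, C₂ ⊆ V \ {r} are sets with |δ(C₁)| = |δ(C₂)| = 2 and C₁ ∩ C₂ ≠ ∅, then |δ(C₁ ∪ C₂)| = 2. -/
lemma cut_submodular {V ι : Type*} [DecidableEq V] [Fintype ι] (ends : ι → V × V)
    (C₁ C₂ : Finset V) :
    (edgeCut ends (C₁ ∪ C₂)).card + (edgeCut ends (C₁ ∩ C₂)).card ≤
      (edgeCut ends C₁).card + (edgeCut ends C₂).card := by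
  classical
  simp only [edgeCut, Finset.card_filter]
  rw [← Finset.sum_add_distrib, ← Finset.sum_add_distrib]
  apply Finset.sum_le_sum
  intro e _
  by_cases h1 : (ends e).1 ∈ C₁ <;> by_cases h2 : (ends e).1 ∈ C₂ <;>
    by_cases h3 : (ends e).2 ∈ C₁ <;> by_cases h4 : (ends e).2 ∈ C₂ <;>
    simp [Finset.mem_union, Finset.mem_inter, h1, h2, h3, h4]

/-- Uncrossing of 2-cuts in a 2-edge-connected graph: if `C₁, C₂ ⊆ V \ {r}` are 2-cuts with
`C₁ ∩ C₂ ≠ ∅`, then `C₁ ∪ C₂` is a 2-cut. -/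
theorem stmt3 {V ι : Type*} [Fintype V] [DecidableEq V] [Fintype ι] (ends : ι → V × V)
    (h2ec : ∀ C : Finset V, C.Nonempty → C ≠ Finset.univ → 2 ≤ (edgeCut ends C).card)
    (r : V) (C₁ C₂ : Finset V) (hr₁ : r ∉ C₁) (hr₂ : r ∉ C₂)
    (h₁ : (edgeCut ends C₁).card = 2) (h₂ : (edgeCut ends C₂).card = 2)
    (hmeet : (C₁ ∩ C₂).Nonempty) :
    (edgeCut ends (C₁ ∪ C₂)).card = 2 := by
  have hsub := cut_submodular ends C₁ C₂
  rw [h₁, h₂] at hsub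
  have hUne : (C₁ ∪ C₂) ≠ Finset.univ := by
    intro h
    have : r ∈ C₁ ∪ C₂ := h ▸ Finset.mem_univ r
    simp [Finset.mem_union, hr₁, hr₂] at this
  have hIne : (C₁ ∩ C₂) ≠ Finset.univ := by
    intro h
    have : r ∈ C₁ ∩ C₂ := h ▸ Finset.mem_univ r
    simp [Finset.mem_inter, hr₁, hr₂] at this
  have hUnonempty : (C₁ ∪ C₂).Nonempty := by
    obtain ⟨x, hx⟩ := hmeet
    exact ⟨x, Finset.mem_union_left _ (Finset.mem_inter.mp hx).1⟩
  have hU := h2ec _ hUnonempty hUne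
  have hI := h2ec _ hmeet hIne
  omega
end

section
/- For any matching M on a vertex set T and any edge set H covering all vertices of T (every vertex of T has an incident H-edge), if B ⊆ H is a set of edges with both endpoints in the set T \ T_cov of vertices uncovered by M, and the degree-sum inequality Σ_{v ∈ T \ T_cov} deg_H(v) ≥ |T \ T_cov| + |B| holds, then |H| ≥ |M| + (|T| − 2|M|), where T_cov is the set of endpoints of M. -/
private lemma filter_mem_sym2_card_le_two {V : Type*} [DecidableEq V] (U : Finset V)
    (e : Sym2 V) : (U.filter (fun v => v ∈ e)).card ≤ 2 := by
  induction e using Sym2.ind with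
  | _ a b =>
    have h : U.filter (fun v => v ∈ s(a, b)) ⊆ {a, b} := by
      intro x hx
      simp only [Finset.mem_filter, Sym2.mem_iff] at hx
      simp only [Finset.mem_insert, Finset.mem_singleton]
      tauto
    calc (U.filter (fun v => v ∈ s(a, b))).card ≤ ({a, b} : Finset V).card :=
        Finset.card_le_card h
      _ ≤ 2 := Finset.card_insert_le _ _ |>.trans (by simp)

private lemma filter_mem_sym2_card_le_one {V : Type*} [DecidableEq V] (U : Finset V)
    (e : Sym2 V) (h : ∃ v ∈ e, v ∉ U) : (U.filter (fun v => v ∈ e)).card ≤ 1 := by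
  induction e using Sym2.ind with
  | _ a b =>
    have hab : a ∉ U ∨ b ∉ U := by
      obtain ⟨v, hv, hvU⟩ := h
      rw [Sym2.mem_iff] at hv
      rcases hv with rfl | rfl
      exacts [Or.inl hvU, Or.inr hvU]
    rcases hab with hnU | hnU
    · have hs : U.filter (fun v => v ∈ s(a, b)) ⊆ {b} := by
        intro x hx
        simp only [Finset.mem_filter, Sym2.mem_iff] at hx
        simp only [Finset.mem_singleton]
        rcases hx.2 with rfl | rfl
        · exact absurd hx.1 hnU
        · rfl
      exact (Finset.card_le_card hs).trans (Finset.card_singleton b).le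
    · have hs : U.filter (fun v => v ∈ s(a, b)) ⊆ {a} := by
        intro x hx
        simp only [Finset.mem_filter, Sym2.mem_iff] at hx
        simp only [Finset.mem_singleton]
        rcases hx.2 with rfl | rfl
        · rfl
        · exact absurd hx.1 hnU
      exact (Finset.card_le_card hs).trans (Finset.card_singleton a).le

/-- If `M ⊆ H` is a matching with endpoints in `T`, every vertex of `T` is covered by `H`,
`B` consists exactly of the edges of `H` with both endpoints uncovered by `M`, and the degree-sum
inequality `∑_{v ∈ T \ T_cov} deg_H(v) ≥ |T \ T_cov| + |B|` holds, then
`|H| ≥ |M| + (|T| − 2|M|)`. -/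
theorem stmt10 {V : Type*} [DecidableEq V] (T : Finset V) (M H B : Finset (Sym2 V))
    (hMH : M ⊆ H) (hBH : B ⊆ H)
    (hMend : ∀ e ∈ M, ∀ v ∈ e, v ∈ T)
    (hmatch : ∀ e ∈ M, ∀ f ∈ M, e ≠ f → ∀ v : V, v ∈ e → v ∉ f)
    (Tcov : Finset V) (hTcov : Tcov = T.filter (fun v => ∃ e ∈ M, v ∈ e))
    (hcover : ∀ v ∈ T, ∃ e ∈ H, v ∈ e)
    (hB : ∀ e ∈ H, ((∀ v ∈ e, v ∈ T \ Tcov) ↔ e ∈ B))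
    (hdeg : (T \ Tcov).card + B.card ≤ ∑ v ∈ T \ Tcov, (H.filter (fun e => v ∈ e)).card) :
    (M.card : ℝ) + ((T.card : ℝ) - 2 * M.card) ≤ H.card := by
  set U := T \ Tcov with hU
  -- swap the double counting
  have hswap : ∑ v ∈ U, (H.filter (fun e => v ∈ e)).card
      = ∑ e ∈ H, (U.filter (fun v => v ∈ e)).card := by
    simp only [Finset.card_filter]
    exact Finset.sum_comm
  -- M edges have all endpoints in Tcov
  have hMcov : ∀ e ∈ M, ∀ v ∈ e, v ∈ Tcov := by
    intro e he v hv
    rw [hTcov, Finset.mem_filter]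
    exact ⟨hMend e he v hv, e, he, hv⟩
  -- M and B are disjoint
  have hMBdisj : Disjoint M B := by
    rw [Finset.disjoint_left]
    intro e heM heB
    induction e using Sym2.ind with
    | _ a b =>
      have haU : a ∈ U := ((hB _ (hBH heB)).2 heB) a (by simp)
      have : a ∈ Tcov := hMcov _ heM a (by simp)
      exact (Finset.mem_sdiff.1 haU).2 this
  -- bound the edge-side sum
  have hMsub : M ⊆ H \ B := by
    intro e he
    exact Finset.mem_sdiff.2 ⟨hMH he, Finset.disjoint_left.1 hMBdisj he⟩
  have hsum : ∑ e ∈ H, (U.filter (fun v => v ∈ e)).card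
      ≤ 2 * B.card + (H.card - B.card - M.card) := by
    rw [← Finset.sum_sdiff hBH]
    have h1 : ∑ e ∈ B, (U.filter (fun v => v ∈ e)).card ≤ 2 * B.card := by
      calc ∑ e ∈ B, (U.filter (fun v => v ∈ e)).card ≤ ∑ _e ∈ B, 2 :=
          Finset.sum_le_sum fun e _ => filter_mem_sym2_card_le_two U e
        _ = 2 * B.card := by rw [Finset.sum_const, smul_eq_mul, mul_comm]
    have h2 : ∑ e ∈ H \ B, (U.filter (fun v => v ∈ e)).card ≤ H.card - B.card - M.card := by
      rw [← Finset.sum_sdiff hMsub]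
      have h3 : ∑ e ∈ M, (U.filter (fun v => v ∈ e)).card = 0 := by
        apply Finset.sum_eq_zero
        intro e he
        rw [Finset.card_eq_zero, Finset.filter_eq_empty_iff]
        intro v hvU hve
        exact (Finset.mem_sdiff.1 hvU).2 (hMcov e he v hve)
      have h4 : ∑ e ∈ (H \ B) \ M, (U.filter (fun v => v ∈ e)).card
          ≤ ((H \ B) \ M).card := by
        calc ∑ e ∈ (H \ B) \ M, (U.filter (fun v => v ∈ e)).card
            ≤ ∑ e ∈ (H \ B) \ M, 1 := by
              apply Finset.sum_le_sum
              intro e he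
              apply filter_mem_sym2_card_le_one
              have heH : e ∈ H := (Finset.mem_sdiff.1 (Finset.mem_sdiff.1 he).1).1
              have heB : e ∉ B := (Finset.mem_sdiff.1 (Finset.mem_sdiff.1 he).1).2
              by_contra hcon
              push_neg at hcon
              exact heB ((hB e heH).1 fun v hv => hcon v hv)
          _ = ((H \ B) \ M).card := by simp
      have hc : ((H \ B) \ M).card = H.card - B.card - M.card := by
        rw [Finset.card_sdiff_of_subset hMsub, Finset.card_sdiff_of_subset hBH]
      omega
    omega
  -- |Tcov| ≤ 2|M|
  have hTcovT : Tcov ⊆ T := by rw [hTcov]; exact Finset.filter_subset _ _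
  have hTcov2M : Tcov.card ≤ 2 * M.card := by
    have hsub : Tcov ⊆ M.biUnion (fun e => T.filter (fun v => v ∈ e)) := by
      intro v hv
      rw [hTcov, Finset.mem_filter] at hv
      obtain ⟨hvT, e, he, hve⟩ := hv
      exact Finset.mem_biUnion.2 ⟨e, he, Finset.mem_filter.2 ⟨hvT, hve⟩⟩
    calc Tcov.card ≤ (M.biUnion (fun e => T.filter (fun v => v ∈ e))).card :=
        Finset.card_le_card hsub
      _ ≤ ∑ e ∈ M, (T.filter (fun v => v ∈ e)).card := Finset.card_biUnion_le
      _ ≤ ∑ _e ∈ M, 2 := Finset.sum_le_sum fun e _ => filter_mem_sym2_card_le_two T e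
      _ = 2 * M.card := by rw [Finset.sum_const, smul_eq_mul, mul_comm]
  -- combine to get |U| + |M| ≤ |H|
  have hBcard : B.card ≤ H.card := Finset.card_le_card hBH
  have hMcard : M.card + B.card ≤ H.card := by
    have := Finset.card_le_card hMsub
    rw [Finset.card_sdiff_of_subset hBH] at this
    omega
  have key : U.card + M.card ≤ H.card := by
    rw [hswap] at hdeg
    omega
  -- |U| = |T| - |Tcov|
  have hUcard : U.card = T.card - Tcov.card := Finset.card_sdiff_of_subset hTcovT
  have hTcovle : Tcov.card ≤ T.card := Finset.card_le_card hTcovT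
  -- finish over ℝ
  have h2 : M.card + T.card ≤ H.card + 2 * M.card := by omega
  have := Nat.cast_le (α := ℝ) |>.2 h2
  push_cast at this
  linarith
end

section
/- The weight of the maximum in the final optimization: the value max over 0 ≤ α ≤ λ ≤ 1 of min{3/2 − α/2, 1 + α − 0.904·α·(1 − e^{−λ})} is strictly less than 1.29. -/
/-- The value `max_{0 ≤ α ≤ λ ≤ 1} min{3/2 − α/2, 1 + α − 0.904·α·(1 − e^{−λ})}` is strictly
less than `1.29`. -/
theorem stmt11 :
    ∀ α lam : ℝ, 0 ≤ α → α ≤ lam → lam ≤ 1 →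
      min (3 / 2 - α / 2) (1 + α - 0.904 * α * (1 - Real.exp (-lam))) < 1.29 := by
  intro α lam hα hαl hl1
  rcases le_or_gt α 0.42 with h | h
  · apply lt_of_le_of_lt (min_le_right _ _)
    set S : ℝ := 1 + α + α^2/2 + α^3/6 + α^4/24 with hSdef
    have hS0 : (0:ℝ) < S := by positivity
    have hS : S ≤ Real.exp α := by
      have h5 := Real.sum_le_exp_of_nonneg hα 5
      have heq : ∑ i ∈ Finset.range 5, α ^ i / (Nat.factorial i) = S := by
        rw [hSdef]
        norm_num [Finset.sum_range_succ, Nat.factorial]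
        try ring
      linarith [heq ▸ h5]
    have hEexp : Real.exp (-lam) ≤ 1 / S := by
      have h1 : Real.exp (-lam) ≤ Real.exp (-α) := Real.exp_le_exp.mpr (by linarith)
      have h2 : Real.exp (-α) ≤ 1 / S := by
        rw [Real.exp_neg, inv_eq_one_div]
        apply one_div_le_one_div_of_le hS0 hS
      linarith
    have hE0 : 0 < Real.exp (-lam) := Real.exp_pos _
    have key2 : 0.096 * α * S + 0.904 * α < 0.29 * S := by
      rw [hSdef]
      nlinarith [mul_nonneg (mul_nonneg hα hα) hα, sq_nonneg α, sq_nonneg (α - 0.42),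
        mul_nonneg (sub_nonneg.2 h) hα, mul_nonneg (mul_nonneg (sub_nonneg.2 h) hα) hα,
        mul_nonneg (mul_nonneg (mul_nonneg (sub_nonneg.2 h) hα) hα) hα,
        mul_nonneg (mul_nonneg (mul_nonneg (mul_nonneg (sub_nonneg.2 h) hα) hα) hα) hα]
    have key : 1 + α - 0.904 * α * (1 - 1/S) < 1.29 := by
      have heq : 1 + α - 0.904 * α * (1 - 1/S)
          = (S + α*S - 0.904*α*S + 0.904*α)/S := by field_simp; ring
      rw [heq, div_lt_iff₀ hS0]
      linarith
    have hmono : 0.904 * α * (1 - 1/S) ≤ 0.904 * α * (1 - Real.exp (-lam)) := by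
      apply mul_le_mul_of_nonneg_left (by linarith) (by positivity)
    linarith
  · apply lt_of_le_of_lt (min_le_left _ _)
    norm_num
    linarith
end

section
/- Uncrossing preserves dual feasibility and value: if λ ∈ ℝ^{𝒞}_{≥0} is feasible for the packing constraints Σ_C λ_C χ^{δ⁻(C)} ≤ χ^{L⃗}, and S, T ∈ 𝒞 satisfy χ^{δ⁻(S)} + χ^{δ⁻(T)} ≥ χ^{δ⁻(S∩T)} + χ^{δ⁻(S∪T)} with λ_S, λ_T ≥ ε > 0 and S∩T, S∪T ∈ 𝒞, then decreasing λ_S and λ_T by ε and increasing λ_{S∩T} and λ_{S∪T} by ε yields a feasible vector with the same sum Σ_C λ_C, while Σ_C λ_C·|C|² strictly increases when S and T cross. -/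
/-- Uncrossing preserves dual feasibility and value: decreasing `λ_S`, `λ_T` by `ε` and
increasing `λ_{S∩T}`, `λ_{S∪T}` by `ε` keeps the vector nonnegative and feasible with the same
sum, while `∑_C λ_C·|C|²` strictly increases when `S` and `T` cross. -/
theorem stmt16 {V ι : Type*} [Fintype V] [DecidableEq V] [Fintype ι]
    (d : Finset V → Finset ι) [∀ C i, Decidable (i ∈ d C)]
    (lam : Finset V → ℝ) (S T : Finset V) (ε : ℝ)
    (hpos : ∀ C, 0 ≤ lam C)
    (hfeas : ∀ i : ι, ∑ C : Finset V, lam C * (if i ∈ d C then 1 else 0) ≤ 1)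
    (huncross : ∀ i : ι,
      (if i ∈ d (S ∩ T) then (1 : ℝ) else 0) + (if i ∈ d (S ∪ T) then (1 : ℝ) else 0) ≤
        (if i ∈ d S then (1 : ℝ) else 0) + (if i ∈ d T then (1 : ℝ) else 0))
    (hε : 0 < ε) (hεS : ε ≤ lam S) (hεT : ε ≤ lam T)
    (lam' : Finset V → ℝ)
    (hlam' : lam' = fun C => lam C - (if C = S then ε else 0) - (if C = T then ε else 0)
        + (if C = S ∩ T then ε else 0) + (if C = S ∪ T then ε else 0)) :
    (∀ C, 0 ≤ lam' C) ∧
    (∀ i : ι, ∑ C : Finset V, lam' C * (if i ∈ d C then 1 else 0) ≤ 1) ∧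
    (∑ C : Finset V, lam' C = ∑ C : Finset V, lam C) ∧
    ((S ∩ T).Nonempty → (S \ T).Nonempty → (T \ S).Nonempty →
      ∑ C : Finset V, lam C * (C.card : ℝ) ^ 2 <
        ∑ C : Finset V, lam' C * (C.card : ℝ) ^ 2) := by
  subst hlam'
  refine ⟨?_, ?_, ?_, ?_⟩
  · intro C
    simp only
    split_ifs <;> subst_vars <;>
      first
      | linarith [hpos S, hpos T, hpos (S ∩ T), hpos (S ∪ T)]
      | linarith [hpos C]
      | simp_all [Finset.inter_self, Finset.union_self]
  · intro i
    have key : ∑ C : Finset V,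
        (lam C - (if C = S then ε else 0) - (if C = T then ε else 0)
          + (if C = S ∩ T then ε else 0) + (if C = S ∪ T then ε else 0)) *
          (if i ∈ d C then 1 else 0)
        = (∑ C : Finset V, lam C * (if i ∈ d C then 1 else 0))
          - ε * (if i ∈ d S then 1 else 0) - ε * (if i ∈ d T then 1 else 0)
          + ε * (if i ∈ d (S ∩ T) then 1 else 0) + ε * (if i ∈ d (S ∪ T) then 1 else 0) := by
      simp only [sub_mul, add_mul, Finset.sum_sub_distrib, Finset.sum_add_distrib,
        ite_mul, zero_mul, Finset.sum_ite_eq', Finset.mem_univ, if_true]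
    rw [key]
    have h1 := huncross i
    have h2 := mul_le_mul_of_nonneg_left h1 hε.le
    have h3 := hfeas i
    nlinarith [h2, h3]
  · simp only [Finset.sum_sub_distrib, Finset.sum_add_distrib,
      Finset.sum_ite_eq', Finset.mem_univ, if_true]
    ring
  · intro h1 h2 h3
    have key : ∑ C : Finset V,
        (lam C - (if C = S then ε else 0) - (if C = T then ε else 0)
          + (if C = S ∩ T then ε else 0) + (if C = S ∪ T then ε else 0)) *
          (C.card : ℝ) ^ 2
        = (∑ C : Finset V, lam C * (C.card : ℝ) ^ 2)
          - ε * (S.card : ℝ) ^ 2 - ε * (T.card : ℝ) ^ 2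
          + ε * ((S ∩ T).card : ℝ) ^ 2 + ε * ((S ∪ T).card : ℝ) ^ 2 := by
      simp only [sub_mul, add_mul, Finset.sum_sub_distrib, Finset.sum_add_distrib,
        ite_mul, zero_mul, Finset.sum_ite_eq', Finset.mem_univ, if_true]
    rw [key]
    have hcards : (S ∪ T).card + (S ∩ T).card = S.card + T.card :=
      Finset.card_union_add_card_inter S T
    have hS : S.card < (S ∪ T).card := by
      apply Finset.card_lt_card
      refine ⟨Finset.subset_union_left, fun hsub => ?_⟩
      obtain ⟨x, hx⟩ := h3
      rw [Finset.mem_sdiff] at hx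
      exact hx.2 (hsub (Finset.mem_union_right _ hx.1))
    have hT : T.card < (S ∪ T).card := by
      apply Finset.card_lt_card
      refine ⟨Finset.subset_union_right, fun hsub => ?_⟩
      obtain ⟨x, hx⟩ := h2
      rw [Finset.mem_sdiff] at hx
      exact hx.2 (hsub (Finset.mem_union_left _ hx.1))
    have e1 : ((S ∪ T).card : ℝ) + ((S ∩ T).card : ℝ) = (S.card : ℝ) + (T.card : ℝ) := by
      exact_mod_cast hcards
    have e2 : (S.card : ℝ) < ((S ∪ T).card : ℝ) := by exact_mod_cast hS
    have e3 : (T.card : ℝ) < ((S ∪ T).card : ℝ) := by exact_mod_cast hT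
    have hkey : 0 < ε * (((S ∩ T).card : ℝ) ^ 2 + ((S ∪ T).card : ℝ) ^ 2
        - (S.card : ℝ) ^ 2 - (T.card : ℝ) ^ 2) := by
      have hc : ((S ∩ T).card : ℝ) = (S.card : ℝ) + (T.card : ℝ) - ((S ∪ T).card : ℝ) := by
        linarith
      rw [hc]
      have hp := mul_pos hε (mul_pos (sub_pos.mpr e2) (sub_pos.mpr e3))
      nlinarith [hp]
    nlinarith [hkey]
end
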